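/- arXiv:1911.06737 — 7 statements merged into one kernel-verified Lean document; each statement's English description precedes it below -/
import Mathlib

section
/- Let P be an irreducible stochastic matrix on a finite state space V with unique invariant distribution π. Then for every state s, π_s = (1 + Σ_{i∈V} P_{si} τ_i^s)^{-1}, where τ_i^s denotes the expected hitting time on s of the Markov chain with transition matrix P started at i. -/
open Finset Matrix

/-!
Kac's formula as a linear identity. Put `v = 1 + P τ`; the hitting-time system says `v - τ`
vanishes off `s` and equals `v s` at `s`, so `π ⬝ᵥ (v - τ) = π s * v s`. On the other hand
invariance of `π` gives `π ⬝ᵥ P τ = π ⬝ᵥ τ`, so `π ⬝ᵥ (v - τ) = π ⬝ᵥ 1 = 1`.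
-/

section

variable {R V : Type*} [CommRing R] [Fintype V] {P : Matrix V V R} {π : V → R}

theorem dotProduct_mulVec_of_vecMul_eq (hπ : π ᵥ* P = π) (τ : V → R) :
    π ⬝ᵥ (P *ᵥ τ) = π ⬝ᵥ τ := by
  rw [dotProduct_mulVec, hπ]

theorem mul_one_add_mulVec_eq_one_of_hitting_system (hsum : ∑ i, π i = 1) (hπ : π ᵥ* P = π)
    {s : V} {τ : V → R} (hτs : τ s = 0) (hτ : ∀ i, i ≠ s → τ i = 1 + (P *ᵥ τ) i) :
    π s * (1 + (P *ᵥ τ) s) = 1 := by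
  have hsingle : π ⬝ᵥ (1 + P *ᵥ τ - τ) = π s * (1 + (P *ᵥ τ) s) := by
    refine (sum_eq_single s (fun i _ hi => ?_) (fun h => absurd (mem_univ s) h)).trans ?_
    · simp [← hτ i hi]
    · simp [hτs]
  have htotal : π ⬝ᵥ (1 + P *ᵥ τ - τ) = 1 := by
    rw [dotProduct_sub, dotProduct_add, dotProduct_mulVec_of_vecMul_eq hπ, dotProduct_one, hsum,
      add_sub_cancel_right]
  rw [← hsingle, htotal]

end

theorem bonacich_invariant_eq_inv_return_time_general
    {V : Type*} [Fintype V]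
    (P : Matrix V V ℝ)
    (π : V → ℝ)
    (hπsum : ∑ i, π i = 1)
    (hπinv : ∀ j, π j = ∑ i, π i * P i j)
    (s : V) (τ : V → ℝ)
    (hτs : τ s = 0)
    (hτ : ∀ i, i ≠ s → τ i = 1 + ∑ j, P i j * τ j) :
    π s = (1 + ∑ i, P s i * τ i)⁻¹ := by
  have hvecMul : π ᵥ* P = π := funext fun j => (hπinv j).symm
  exact eq_inv_of_mul_eq_one_left
    (mul_one_add_mulVec_eq_one_of_hitting_system hπsum hvecMul hτs hτ)

/-- For an irreducible stochastic matrix `P` on a finite state space with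
invariant distribution `π`, and `τ` the vector of expected hitting times on `s`
(characterized as the solution of the standard hitting-time linear system),
we have `π s = (1 + ∑ i, P s i * τ i)⁻¹`. -/
theorem bonacich_invariant_eq_inv_return_time
    {V : Type*} [Fintype V] [DecidableEq V] [Nonempty V]
    (P : Matrix V V ℝ)
    (hPnn : ∀ i j, 0 ≤ P i j)
    (hProw : ∀ i, ∑ j, P i j = 1)
    (hPirr : ∀ i j, ∃ k : ℕ, 0 < (P ^ k) i j)
    (π : V → ℝ)
    (hπnn : ∀ i, 0 ≤ π i) (hπsum : ∑ i, π i = 1)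
    (hπinv : ∀ j, π j = ∑ i, π i * P i j)
    (s : V) (τ : V → ℝ)
    (hτs : τ s = 0)
    (hτ : ∀ i, i ≠ s → τ i = 1 + ∑ j, P i j * τ j) :
    π s = (1 + ∑ i, P s i * τ i)⁻¹ :=
  bonacich_invariant_eq_inv_return_time_general P π hπsum hπinv s τ hτs hτ
end

section
/- In the centrality game with m = 1 out-link per node, for any node s and any strategy profile x of the other players: if the in-neighborhood N_s^-(x) of s is nonempty, then the best response set of s equals N_s^-(x). -/
/-!
Write `w j = β ^ τ j`, where `τ j` is the first time the out-link path from `j` reaches `s`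
(`w j = 0` if it never does). Then `w s = 1` and `w j = β * w (x j)` for `j ≠ s`, so if `s` links
to `b`, the row vector `w` times `1 - β R(x)ᵀ` vanishes off `s`; pairing with `η` gives
`u_s = (1 - β) ⟪w, η⟫ / (1 - β w b)`. Thus the best responses of `s` are the maximizers of `w b`
over `b ≠ s`, and `w b ≤ β` with equality exactly when `x b = s`.
-/

open Finset Matrix

/-- Adjacency matrix of the graph formed when each node `i` places its single
out-link towards `x i`. -/
noncomputable def R1 {V : Type*} [Fintype V] [DecidableEq V] (x : V → V) :
    Matrix V V ℝ :=
  Matrix.of fun i j => if x i = j then (1 : ℝ) else 0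

/-- Utility of player `s` in the game `Γ(V, β, η, 1)`: its Bonacich centrality
`((1-β)(I - β R(x)ᵀ)⁻¹ η)_s` in the formed graph. -/
noncomputable def util1 {V : Type*} [Fintype V] [DecidableEq V]
    (β : ℝ) (η : V → ℝ) (x : V → V) (s : V) : ℝ :=
  ((1 - β) • ((1 - β • (R1 x)ᵀ)⁻¹).mulVec η) s

section HitDiscount

variable {V : Type*} [DecidableEq V]

open Classical in
noncomputable def hitDiscount (β : ℝ) (x : V → V) (s j : V) : ℝ :=
  if h : ∃ k, x^[k] j = s then β ^ Nat.find h else 0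

variable {β : ℝ} {x : V → V} {s j : V}

@[simp]
lemma hitDiscount_self : hitDiscount β x s s = 1 := by
  have h0 : ∃ k, x^[k] s = s := ⟨0, rfl⟩
  rw [hitDiscount, dif_pos h0, (Nat.find_eq_zero h0).mpr rfl, pow_zero]

lemma hitDiscount_of_ne (hj : j ≠ s) : hitDiscount β x s j = β * hitDiscount β x s (x j) := by
  have hshift : (∃ k, x^[k] j = s) ↔ ∃ k, x^[k] (x j) = s :=
    ⟨fun ⟨k, hk⟩ => by cases k with
      | zero => exact absurd hk hj
      | succ k => exact ⟨k, hk⟩,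
     fun ⟨k, hk⟩ => ⟨k + 1, hk⟩⟩
  unfold hitDiscount
  by_cases h : ∃ k, x^[k] j = s
  · rw [dif_pos h, dif_pos (hshift.mp h), Nat.find_comp_succ h (hshift.mp h) hj, pow_succ']
    rfl
  · rw [dif_neg h, dif_neg (mt hshift.mpr h), mul_zero]

lemma hitDiscount_nonneg (hβ : 0 ≤ β) : 0 ≤ hitDiscount β x s j := by
  unfold hitDiscount
  split
  exacts [pow_nonneg hβ _, le_rfl]

lemma hitDiscount_le_one (hβ0 : 0 ≤ β) (hβ1 : β ≤ 1) : hitDiscount β x s j ≤ 1 := by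
  unfold hitDiscount
  split
  exacts [pow_le_one₀ hβ0 hβ1, zero_le_one]

lemma one_sub_mul_hitDiscount_pos (hβ0 : 0 ≤ β) (hβ1 : β < 1) :
    0 < 1 - β * hitDiscount β x s j := by
  nlinarith [hitDiscount_le_one (x := x) (s := s) (j := j) hβ0 hβ1.le,
    hitDiscount_nonneg (x := x) (s := s) (j := j) hβ0]

lemma hitDiscount_le_of_ne (hβ0 : 0 ≤ β) (hβ1 : β ≤ 1) (hj : j ≠ s) :
    hitDiscount β x s j ≤ β := by
  rw [hitDiscount_of_ne hj]
  exact mul_le_of_le_one_right hβ0 (hitDiscount_le_one hβ0 hβ1)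

lemma hitDiscount_eq_iff_of_ne (hβ0 : 0 < β) (hβ1 : β < 1) (hj : j ≠ s) :
    hitDiscount β x s j = β ↔ x j = s := by
  refine ⟨fun h => ?_, fun h => by rw [hitDiscount_of_ne hj, h, hitDiscount_self, mul_one]⟩
  rw [hitDiscount_of_ne hj, mul_eq_left₀ hβ0.ne'] at h
  by_contra hxj
  linarith [hitDiscount_le_of_ne (x := x) hβ0.le hβ1.le hxj]

end HitDiscount

section Centrality

variable {V : Type*} [Fintype V] [DecidableEq V]

lemma R1_mulVec_apply (y : V → V) (v : V → ℝ) (i : V) : (R1 y *ᵥ v) i = v (y i) := by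
  simp [R1, mulVec, dotProduct]

lemma det_one_sub_smul_R1_transpose_ne_zero {β : ℝ} (hβ0 : 0 ≤ β) (hβ1 : β < 1) (y : V → V) :
    (1 - β • (R1 y)ᵀ).det ≠ 0 := by
  refine det_ne_zero_of_sum_col_lt_diag fun k => ?_
  have hoff : ∀ i ∈ univ.erase k, ‖(1 - β • (R1 y)ᵀ) i k‖ = if y k = i then β else 0 := by
    intro i hi
    split_ifs with h <;> simp [R1, h, ne_of_mem_erase hi, abs_of_nonneg hβ0]
  rw [sum_congr rfl hoff, sum_ite_eq]
  by_cases hk : y k = k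
  · simpa [R1, hk, abs_of_pos (sub_pos.mpr hβ1)] using sub_pos.mpr hβ1
  · simpa [R1, hk] using hβ1

lemma vecMul_one_sub_smul_R1_transpose (β : ℝ) (y : V → V) (w : V → ℝ) :
    w ᵥ* (1 - β • (R1 y)ᵀ) = fun i => w i - β * w (y i) := by
  ext i
  simp [vecMul_sub, vecMul_smul, vecMul_transpose, R1_mulVec_apply]

lemma mul_inv_mulVec_apply_eq_dotProduct {β : ℝ} (hβ0 : 0 ≤ β) (hβ1 : β < 1) (y : V → V)
    (η w : V → ℝ) (s : V) (hw : ∀ j ≠ s, w j = β * w (y j)) :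
    (w s - β * w (y s)) * ((1 - β • (R1 y)ᵀ)⁻¹ *ᵥ η) s = w ⬝ᵥ η := by
  set M : Matrix V V ℝ := 1 - β • (R1 y)ᵀ
  have hM : IsUnit M.det := (det_one_sub_smul_R1_transpose_ne_zero hβ0 hβ1 y).isUnit
  have hrow : w ᵥ* M = Pi.single s (w s - β * w (y s)) := by
    rw [vecMul_one_sub_smul_R1_transpose]
    ext j
    rcases eq_or_ne j s with rfl | hj
    · simp
    · simp [hj, ← hw j hj]
  calc (w s - β * w (y s)) * (M⁻¹ *ᵥ η) s = w ᵥ* M ⬝ᵥ (M⁻¹ *ᵥ η) := by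
        rw [hrow, single_dotProduct]
    _ = w ⬝ᵥ (M *ᵥ (M⁻¹ *ᵥ η)) := (dotProduct_mulVec _ _ _).symm
    _ = w ⬝ᵥ η := by rw [mulVec_mulVec, mul_nonsing_inv _ hM, one_mulVec]

lemma util1_update_eq {β : ℝ} (hβ0 : 0 ≤ β) (hβ1 : β < 1) (η : V → ℝ) (x : V → V) (s b : V) :
    util1 β η (Function.update x s b) s
      = (1 - β) * (hitDiscount β x s ⬝ᵥ η) / (1 - β * hitDiscount β x s b) := by
  have hpos : 0 < 1 - β * hitDiscount β x s b := one_sub_mul_hitDiscount_pos hβ0 hβ1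
  have key := mul_inv_mulVec_apply_eq_dotProduct hβ0 hβ1 (Function.update x s b) η
    (hitDiscount β x s) s fun j hj => by rw [Function.update_of_ne hj, hitDiscount_of_ne hj]
  rw [Function.update_self, hitDiscount_self] at key
  rw [util1, Pi.smul_apply, smul_eq_mul, ← key]
  field_simp

lemma hitDiscount_dotProduct_pos {β : ℝ} (hβ : 0 ≤ β) {η : V → ℝ} (hη : ∀ i, 0 < η i)
    (x : V → V) (s : V) : 0 < hitDiscount β x s ⬝ᵥ η :=
  sum_pos' (fun i _ => mul_nonneg (hitDiscount_nonneg hβ) (hη i).le)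
    ⟨s, mem_univ s, by simpa using hη s⟩

lemma util1_update_le_util1_update_iff {β : ℝ} (hβ0 : 0 < β) (hβ1 : β < 1) {η : V → ℝ}
    (hη : ∀ i, 0 < η i) (x : V → V) (s a b : V) :
    util1 β η (Function.update x s b) s ≤ util1 β η (Function.update x s a) s ↔
      hitDiscount β x s b ≤ hitDiscount β x s a := by
  have hnum : 0 < (1 - β) * (hitDiscount β x s ⬝ᵥ η) :=
    mul_pos (sub_pos.mpr hβ1) (hitDiscount_dotProduct_pos hβ0.le hη x s)
  rw [util1_update_eq hβ0.le hβ1, util1_update_eq hβ0.le hβ1,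
    div_le_div_iff_of_pos_left hnum (one_sub_mul_hitDiscount_pos hβ0.le hβ1)
      (one_sub_mul_hitDiscount_pos hβ0.le hβ1), sub_le_sub_iff_left, mul_le_mul_iff_right₀ hβ0]

end Centrality

theorem best_response_eq_in_neighborhood_m1_general
    {V : Type*} [Fintype V] [DecidableEq V]
    (β : ℝ) (hβ0 : 0 < β) (hβ1 : β < 1)
    (η : V → ℝ) (hη : ∀ i, 0 < η i)
    (x : V → V) (s : V)
    (hne : ∃ i, i ≠ s ∧ x i = s) :
    {a : V | a ≠ s ∧ ∀ b : V, b ≠ s →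
        util1 β η (Function.update x s b) s ≤ util1 β η (Function.update x s a) s}
      = {i : V | i ≠ s ∧ x i = s} := by
  obtain ⟨i₀, hi₀s, hi₀⟩ := hne
  ext a
  simp only [Set.mem_ofPred_eq, util1_update_le_util1_update_iff hβ0 hβ1 hη]
  refine and_congr_right fun has => ⟨fun hmax => ?_, fun hxa b hb => ?_⟩
  · rw [← hitDiscount_eq_iff_of_ne hβ0 hβ1 has]
    exact le_antisymm (hitDiscount_le_of_ne hβ0.le hβ1.le has)
      (((hitDiscount_eq_iff_of_ne hβ0 hβ1 hi₀s).mpr hi₀).symm.trans_le (hmax i₀ hi₀s))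
  · rw [(hitDiscount_eq_iff_of_ne hβ0 hβ1 has).mpr hxa]
    exact hitDiscount_le_of_ne hβ0.le hβ1.le hb

/-- in `Γ(V,β,η,1)`, if the in-neighborhood of `s` is nonempty, then the
best response set of `s` equals its in-neighborhood `N_s^-(x) = {i | i ≠ s ∧ x i = s}`. -/
theorem best_response_eq_in_neighborhood_m1
    {V : Type*} [Fintype V] [DecidableEq V]
    (β : ℝ) (hβ0 : 0 < β) (hβ1 : β < 1)
    (η : V → ℝ) (hη : ∀ i, 0 < η i) (hηsum : ∑ i, η i = 1)
    (x : V → V) (hx : ∀ i, x i ≠ i) (s : V)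
    (hne : ∃ i, i ≠ s ∧ x i = s) :
    {a : V | a ≠ s ∧ ∀ b : V, b ≠ s →
        util1 β η (Function.update x s b) s ≤ util1 β η (Function.update x s a) s}
      = {i : V | i ≠ s ∧ x i = s} :=
  best_response_eq_in_neighborhood_m1_general β hβ0 hβ1 η hη x s hne
end

section
/- In the centrality game with m = 1 out-link per node, a strategy profile x is a Nash equilibrium if and only if the graph G(x) is of type C_2^{l,r} for some l, r with 2l + r = n, i.e., G(x) is a disjoint union of l two-cliques together with r singleton nodes of in-degree zero each pointing into one of the two-cliques. -/
open Finset Matrix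

/-!
Expanding `(1 - β Rᵀ)⁻¹` as a Neumann series, the centrality of `s` is
`(1 - β) ∑ᵢ ηᵢ ∑ₖ βᵏ [x^[k] i = s]`. Cutting each walk at its first visit to `s` factors this as
`A · g(s)`, where `A > 0` does not depend on the link of `s` and `g(s) = ∑ₖ βᵏ [x^[k] s = s]` is
the return generating function of `s`: it equals `(1 - βᵖ)⁻¹` when `s` lies on a cycle of length
`p`, and `1` otherwise. Since self-links are excluded, `g(s) ≤ (1 - β²)⁻¹`, with equality exactly
on 2-cycles. A node pointed at by some `j` can close the 2-cycle `s ⇄ j`, so in equilibrium it lies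
on one; a node of in-degree zero has `g(s) = 1` whatever it does.
-/

open Function

section FunctionalGraph

variable {V : Type*} {x y : V → V} {s i : V}

lemma iterate_eq_of_eq_off (hxy : ∀ v, v ≠ s → x v = y v) {t : ℕ}
    (hmiss : ∀ j < t, x^[j] i ≠ s) : y^[t] i = x^[t] i := by
  induction t with
  | zero => rfl
  | succ t ih =>
    rw [iterate_succ_apply', iterate_succ_apply', ih fun j hj => hmiss j (by omega),
      hxy _ (hmiss t t.lt_succ_self)]

lemma exists_iterate_eq_of_eq_off (hxy : ∀ v, v ≠ s → x v = y v) (h : ∃ k, x^[k] i = s) :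
    ∃ k, y^[k] i = s := by
  classical
  exact ⟨Nat.find h,
    (iterate_eq_of_eq_off hxy fun j hj => Nat.find_min h hj).trans (Nat.find_spec h)⟩

lemma minimalPeriod_eq_zero_of_forall_ne (h : ∀ j, x j ≠ s) : minimalPeriod x s = 0 := by
  rw [minimalPeriod_eq_zero_iff_notMem_periodicPts]
  rintro ⟨n, hn, hper⟩
  obtain ⟨m, rfl⟩ := Nat.exists_eq_succ_of_ne_zero hn.ne'
  exact h (x^[m] s) (by rw [← iterate_succ_apply' x m s]; exact hper)

lemma update_ne_of_forall_ne [DecidableEq V] {b : V} (hb : b ≠ s)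
    (h : ∀ j, x j ≠ s) (j : V) : update x s b j ≠ s := by
  rcases eq_or_ne j s with rfl | hjs
  · simpa using hb
  · simpa [hjs] using h j

lemma minimalPeriod_eq_two (hs : x s ≠ s) (h2 : x (x s) = s) : minimalPeriod x s = 2 :=
  minimalPeriod_eq_prime h2 hs

lemma minimalPeriod_ne_two (h2 : x (x s) ≠ s) : minimalPeriod x s ≠ 2 :=
  fun hp => h2 (hp ▸ isPeriodicPt_minimalPeriod x s : IsPeriodicPt x 2 s)

end FunctionalGraph

section WalkGF

variable {V : Type*} [DecidableEq V]

noncomputable def walkGF (β : ℝ) (x : V → V) (i j : V) : ℝ :=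
  ∑' k : ℕ, if x^[k] i = j then β ^ k else 0

variable {β : ℝ} {x : V → V}

lemma summable_walkGF (hβ0 : 0 ≤ β) (hβ1 : β < 1) (i j : V) :
    Summable fun k : ℕ => if x^[k] i = j then β ^ k else 0 :=
  (summable_geometric_of_lt_one hβ0 hβ1).of_nonneg_of_le (fun k => by split <;> positivity)
    (fun k => by split <;> simp [pow_nonneg hβ0])

lemma walkGF_self_eq_tsum_dvd (s : V) :
    walkGF β x s s = ∑' k : ℕ, if minimalPeriod x s ∣ k then β ^ k else 0 := by
  unfold walkGF
  congr 1 with k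
  exact if_congr isPeriodicPt_iff_minimalPeriod_dvd rfl rfl

lemma walkGF_self_of_minimalPeriod_eq_zero {s : V} (h : minimalPeriod x s = 0) :
    walkGF β x s s = 1 := by
  rw [walkGF_self_eq_tsum_dvd, h, tsum_eq_single 0 fun k hk => by simp [hk]]
  simp

lemma walkGF_self_of_forall_ne {s : V} (h : ∀ j, x j ≠ s) : walkGF β x s s = 1 :=
  walkGF_self_of_minimalPeriod_eq_zero (minimalPeriod_eq_zero_of_forall_ne h)

lemma walkGF_self_of_minimalPeriod_pos (hβ0 : 0 ≤ β) (hβ1 : β < 1) {s : V}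
    (h : 0 < minimalPeriod x s) : walkGF β x s s = (1 - β ^ minimalPeriod x s)⁻¹ := by
  set p := minimalPeriod x s
  have hsupp : support (fun k : ℕ => if p ∣ k then β ^ k else 0) ⊆ Set.range (p * ·) :=
    fun k hk => by
      obtain ⟨m, rfl⟩ : p ∣ k := by_contra fun hpk => hk (if_neg hpk)
      exact ⟨m, rfl⟩
  rw [walkGF_self_eq_tsum_dvd, ← (mul_right_injective₀ h.ne').tsum_eq hsupp,
    ← tsum_geometric_of_lt_one (pow_nonneg hβ0 _) (pow_lt_one₀ hβ0 hβ1 h.ne')]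
  simp [pow_mul]

lemma walkGF_self_le (hβ0 : 0 ≤ β) (hβ1 : β < 1) {s : V} (hs : x s ≠ s) :
    walkGF β x s s ≤ (1 - β ^ 2)⁻¹ := by
  have hβ2 : 0 < 1 - β ^ 2 := by nlinarith
  rcases (minimalPeriod x s).eq_zero_or_pos with h | h
  · rw [walkGF_self_of_minimalPeriod_eq_zero h]
    exact (one_le_inv₀ hβ2).mpr (by nlinarith)
  · have h2 : 2 ≤ minimalPeriod x s := by
      have := mt minimalPeriod_eq_one_iff_isFixedPt.mp hs
      omega
    rw [walkGF_self_of_minimalPeriod_pos hβ0 hβ1 h]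
    exact inv_anti₀ hβ2 (by linarith [pow_le_pow_of_le_one hβ0 hβ1.le h2])

lemma walkGF_self_lt (hβ0 : 0 < β) (hβ1 : β < 1) {s : V} (hs : x s ≠ s) (h2 : x (x s) ≠ s) :
    walkGF β x s s < (1 - β ^ 2)⁻¹ := by
  have hβ2 : 0 < 1 - β ^ 2 := by nlinarith
  rcases (minimalPeriod x s).eq_zero_or_pos with h | h
  · rw [walkGF_self_of_minimalPeriod_eq_zero h]
    exact (one_lt_inv₀ hβ2).mpr (by nlinarith)
  · have h3 : 2 < minimalPeriod x s := by
      have := mt minimalPeriod_eq_one_iff_isFixedPt.mp hs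
      have := minimalPeriod_ne_two h2
      omega
    rw [walkGF_self_of_minimalPeriod_pos hβ0.le hβ1 h]
    exact inv_strictAnti₀ hβ2 (by linarith [pow_lt_pow_right_of_lt_one₀ hβ0 hβ1 h3])

lemma walkGF_self_of_two_cycle (hβ0 : 0 ≤ β) (hβ1 : β < 1) {s : V} (hs : x s ≠ s)
    (h2 : x (x s) = s) : walkGF β x s s = (1 - β ^ 2)⁻¹ := by
  rw [walkGF_self_of_minimalPeriod_pos hβ0 hβ1 (by rw [minimalPeriod_eq_two hs h2]; norm_num),
    minimalPeriod_eq_two hs h2]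

lemma walkGF_self_update_of_apply_eq (hβ0 : 0 ≤ β) (hβ1 : β < 1) {s j : V} (hjs : j ≠ s)
    (hj : x j = s) : walkGF β (update x s j) s s = (1 - β ^ 2)⁻¹ :=
  walkGF_self_of_two_cycle hβ0 hβ1 (by simpa using hjs) (by simpa [hjs] using hj)

lemma walkGF_eq_pow_mul_walkGF_self (hβ0 : 0 ≤ β) (hβ1 : β < 1) {i s : V} {t : ℕ}
    (ht : x^[t] i = s) (hmiss : ∀ j < t, x^[j] i ≠ s) :
    walkGF β x i s = β ^ t * walkGF β x s s := by
  rw [walkGF, ← (summable_walkGF hβ0 hβ1 i s).sum_add_tsum_nat_add t,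
    sum_eq_zero fun k hk => if_neg (hmiss k (mem_range.mp hk)), zero_add, walkGF,
    ← tsum_mul_left]
  congr 1 with k
  rw [iterate_add_apply, ht, pow_add]
  split <;> ring

lemma walkGF_eq_zero_of_forall_ne {i s : V} (h : ∀ k, x^[k] i ≠ s) : walkGF β x i s = 0 := by
  simp [walkGF, h]

lemma exists_walkGF_eq_mul_walkGF_self (hβ0 : 0 ≤ β) (hβ1 : β < 1) {y : V → V} {s : V}
    (hxy : ∀ v, v ≠ s → x v = y v) (i : V) :
    ∃ c : ℝ, 0 ≤ c ∧ (i = s → c = 1) ∧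
      walkGF β x i s = c * walkGF β x s s ∧ walkGF β y i s = c * walkGF β y s s := by
  classical
  by_cases h : ∃ k, x^[k] i = s
  · have hmiss : ∀ j < Nat.find h, x^[j] i ≠ s := fun j hj => Nat.find_min h hj
    have hagree : ∀ j ≤ Nat.find h, y^[j] i = x^[j] i := fun j hj =>
      iterate_eq_of_eq_off hxy fun k hk => hmiss k (hk.trans_le hj)
    refine ⟨β ^ Nat.find h, by positivity, fun his => ?_,
      walkGF_eq_pow_mul_walkGF_self hβ0 hβ1 (Nat.find_spec h) hmiss,
      walkGF_eq_pow_mul_walkGF_self hβ0 hβ1 ((hagree _ le_rfl).trans (Nat.find_spec h))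
        fun j hj => (hagree j hj.le).trans_ne (hmiss j hj)⟩
    rw [(Nat.find_eq_zero h).mpr his, pow_zero]
  · have h' : ¬∃ k, y^[k] i = s :=
      mt (exists_iterate_eq_of_eq_off fun v hv => (hxy v hv).symm) h
    push Not at h h'
    exact ⟨0, le_rfl, fun his => absurd his (h 0),
      by rw [walkGF_eq_zero_of_forall_ne h, zero_mul],
      by rw [walkGF_eq_zero_of_forall_ne h', zero_mul]⟩

end WalkGF

section Centrality

variable {V : Type*} [Fintype V] [DecidableEq V] {β : ℝ} {x : V → V}

lemma one_sub_smul_transpose_R1_mulVec_apply (w : V → ℝ) (s : V) :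
    ((1 - β • (R1 x)ᵀ) *ᵥ w) s = w s - β * ∑ j ∈ univ.filter (x · = s), w j := by
  rw [sub_mulVec, one_mulVec, smul_mulVec, Pi.sub_apply, Pi.smul_apply, smul_eq_mul, sum_filter]
  simp [mulVec, dotProduct, R1]

lemma det_one_sub_smul_transpose_R1_ne_zero (hβ : |β| < 1) : (1 - β • (R1 x)ᵀ).det ≠ 0 := by
  refine det_ne_zero_of_sum_col_lt_diag fun k => ?_
  have hoff : ∀ i ∈ univ.erase k, ‖(1 - β • (R1 x)ᵀ) i k‖ = if x k = i then |β| else 0 := by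
    intro i hi
    simp only [R1, Matrix.sub_apply, one_apply_ne (ne_of_mem_erase hi), Matrix.smul_apply,
      transpose_apply, of_apply, zero_sub, norm_neg]
    split <;> simp
  rw [sum_congr rfl hoff, sum_ite_eq]
  by_cases hk : x k = k
  · simpa [R1, hk] using sub_ne_zero.mpr (lt_of_le_of_lt (le_abs_self β) hβ).ne'
  · simpa [R1, hk] using hβ

lemma one_sub_smul_transpose_R1_mulVec_walkGF (hβ0 : 0 ≤ β) (hβ1 : β < 1) (i : V) :
    (1 - β • (R1 x)ᵀ) *ᵥ walkGF β x i = Pi.single i 1 := by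
  ext s
  have hsum : ∀ j, Summable fun k : ℕ => if x^[k] i = j then β ^ k else 0 :=
    summable_walkGF hβ0 hβ1 i
  have hpred : ∑ j ∈ univ.filter (x · = s), walkGF β x i j
      = ∑' k : ℕ, if x^[k + 1] i = s then β ^ k else 0 := by
    simp only [walkGF]
    rw [← Summable.tsum_finsetSum fun j _ => hsum j]
    congr 1 with k
    rw [sum_ite_eq]
    simp [iterate_succ_apply']
  rw [one_sub_smul_transpose_R1_mulVec_apply, hpred, ← tsum_mul_left, walkGF,
    (hsum s).tsum_eq_zero_add]
  have hshift : (fun k : ℕ => β * if x^[k + 1] i = s then β ^ k else 0)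
      = fun k : ℕ => if x^[k + 1] i = s then β ^ (k + 1) else 0 := by
    ext k; split <;> ring
  rw [hshift, add_sub_cancel_right, Pi.single_apply]
  simp [eq_comm]

lemma util1_eq_sum_walkGF (hβ0 : 0 ≤ β) (hβ1 : β < 1) (η : V → ℝ) (s : V) :
    util1 β η x s = (1 - β) * ∑ i, η i * walkGF β x i s := by
  have : Invertible (1 - β • (R1 x)ᵀ) := invertibleOfIsUnitDet _
    (det_one_sub_smul_transpose_R1_ne_zero (abs_lt.mpr ⟨by linarith, hβ1⟩)).isUnit
  have hsol : (1 - β • (R1 x)ᵀ)⁻¹ *ᵥ η = ∑ i, η i • walkGF β x i := by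
    refine inv_mulVec_eq_vec ?_
    ext s
    simp [mulVec_sum, mulVec_smul, one_sub_smul_transpose_R1_mulVec_walkGF hβ0 hβ1,
      Finset.sum_apply, Pi.single_apply]
  simp [util1, hsol, Finset.sum_apply]

lemma exists_util1_eq_mul_walkGF_self (hβ0 : 0 ≤ β) (hβ1 : β < 1) {η : V → ℝ}
    (hη : ∀ i, 0 < η i) {y : V → V} {s : V} (hxy : ∀ v, v ≠ s → x v = y v) :
    ∃ A, 0 < A ∧ util1 β η x s = A * walkGF β x s s ∧ util1 β η y s = A * walkGF β y s s := by
  choose c hc0 hcs hcx hcy using exists_walkGF_eq_mul_walkGF_self hβ0 hβ1 hxy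
  have hA : 0 < ∑ i, η i * c i :=
    sum_pos' (fun i _ => mul_nonneg (hη i).le (hc0 i))
      ⟨s, mem_univ s, by simpa [hcs s rfl] using hη s⟩
  refine ⟨(1 - β) * ∑ i, η i * c i, mul_pos (by linarith) hA, ?_, ?_⟩
  · rw [util1_eq_sum_walkGF hβ0 hβ1, mul_assoc, sum_mul]
    exact congrArg _ (sum_congr rfl fun i _ => by rw [hcx i, mul_assoc])
  · rw [util1_eq_sum_walkGF hβ0 hβ1, mul_assoc, sum_mul]
    exact congrArg _ (sum_congr rfl fun i _ => by rw [hcy i, mul_assoc])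

lemma util1_le_util1_iff_walkGF_self_le (hβ0 : 0 ≤ β) (hβ1 : β < 1) {η : V → ℝ}
    (hη : ∀ i, 0 < η i) {y : V → V} {s : V} (hxy : ∀ v, v ≠ s → x v = y v) :
    util1 β η y s ≤ util1 β η x s ↔ walkGF β y s s ≤ walkGF β x s s := by
  obtain ⟨A, hA, hx, hy⟩ := exists_util1_eq_mul_walkGF_self hβ0 hβ1 hη hxy
  rw [hx, hy, mul_le_mul_iff_right₀ hA]

end Centrality

theorem nash_iff_C2lr_m1_general
    {V : Type*} [Fintype V] [DecidableEq V]
    (β : ℝ) (hβ0 : 0 < β) (hβ1 : β < 1)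
    (η : V → ℝ) (hη : ∀ i, 0 < η i)
    (x : V → V) (hx : ∀ i, x i ≠ i) :
    (∀ s b, b ≠ s → util1 β η (Function.update x s b) s ≤ util1 β η x s)
      ↔ (∀ i, x (x i) = i ∨ ((∀ j, x j ≠ i) ∧ x (x (x i)) = x i)) := by
  have hdev : ∀ s b, util1 β η (update x s b) s ≤ util1 β η x s ↔
      walkGF β (update x s b) s s ≤ walkGF β x s s := fun s b =>
    util1_le_util1_iff_walkGF_self_le hβ0.le hβ1 hη fun v hv => (update_of_ne hv b x).symm
  constructor
  · intro hnash
    have hpointed : ∀ s j, x j = s → x (x s) = s := by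
      intro s j hj
      by_contra h2
      have hjs : j ≠ s := by rintro rfl; exact hx j hj
      have hle := (hdev s j).1 (hnash s j hjs)
      rw [walkGF_self_update_of_apply_eq hβ0.le hβ1 hjs hj] at hle
      exact hle.not_gt (walkGF_self_lt hβ0 hβ1 (hx s) h2)
    intro i
    rcases em (∃ j, x j = i) with ⟨j, hj⟩ | hin
    · exact Or.inl (hpointed i j hj)
    · push Not at hin
      exact Or.inr ⟨hin, hpointed (x i) i rfl⟩
  · intro hC s b hbs
    rw [hdev]
    rcases hC s with h2 | ⟨hin, -⟩
    · rw [walkGF_self_of_two_cycle hβ0.le hβ1 (hx s) h2]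
      exact walkGF_self_le hβ0.le hβ1 (by simpa using hbs)
    · rw [walkGF_self_of_forall_ne hin, walkGF_self_of_forall_ne (update_ne_of_forall_ne hbs hin)]

/-- in `Γ(V,β,η,1)`, a profile `x` is a Nash equilibrium iff the formed
graph is of type `C_2^{l,r}`: every node either belongs to a 2-clique, or has zero
in-degree and points to a node belonging to a 2-clique. -/
theorem nash_iff_C2lr_m1
    {V : Type*} [Fintype V] [DecidableEq V]
    (β : ℝ) (hβ0 : 0 < β) (hβ1 : β < 1)
    (η : V → ℝ) (hη : ∀ i, 0 < η i) (hηsum : ∑ i, η i = 1)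
    (x : V → V) (hx : ∀ i, x i ≠ i) :
    (∀ s b, b ≠ s → util1 β η (Function.update x s b) s ≤ util1 β η x s)
      ↔ (∀ i, x (x i) = i ∨ ((∀ j, x j ≠ i) ∧ x (x (x i)) = x i)) :=
  nash_iff_C2lr_m1_general β hβ0 hβ1 η hη x hx
end

section
/- In the centrality game with m = 1 and n even, the limit set N* of the best response dynamics coincides with the set of strict Nash equilibria, namely the profiles whose graph is a disjoint union of n/2 two-cliques. -/
open Finset Matrix

/-- Best response set of player `s` at profile `x` in `Γ(V, β, η, 1)`. -/
def br1 {V : Type*} [Fintype V] [DecidableEq V]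
    (β : ℝ) (η : V → ℝ) (x : V → V) (s : V) : Set V :=
  {a : V | a ≠ s ∧ ∀ b : V, b ≠ s →
    util1 β η (Function.update x s b) s ≤ util1 β η (Function.update x s a) s}

/-- One step of the asynchronous best response dynamics: some player `s` revises its
action to some element of its best response set. -/
def step1 {V : Type*} [Fintype V] [DecidableEq V]
    (β : ℝ) (η : V → ℝ) (x y : V → V) : Prop :=
  ∃ s a, a ∈ br1 β η x s ∧ y = Function.update x s a

/-!
Let `h` be the discounted first-passage value to `s` of the walk along out-links; it does not
depend on the link of `s` itself. After `s` links to `b`, every walk to `s` is a first passage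
followed by a number of returns `s → b ⇝ s`, so the centrality of `s` is `K / (1 - β h(b))` with
`K > 0` independent of `b`. As `h(b) = β` when `b` links to `s` and `h(b) ≤ β²` otherwise, a
player with an in-link best-responds exactly by reciprocating one, and a player without in-links
is indifferent. Hence perfect matchings are absorbing. Conversely the set of matched nodes can
always be enlarged: an unmatched node with an in-link reciprocates it; if no unmatched node has
one, parity yields two unmatched nodes `u ≠ v`, and `u → v`, `v → u` are successive best responses.
-/

open Function

theorem eq_zero_of_abs_le_mul_abs_comp {V : Type*} [Finite V] {β : ℝ} (hβ0 : 0 ≤ β)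
    (hβ1 : β < 1) {f : V → V} {v : V → ℝ} (hv : ∀ i, |v i| ≤ β * |v (f i)|) : v = 0 := by
  funext i
  have : Nonempty V := ⟨i⟩
  obtain ⟨m, hm⟩ := Finite.exists_max fun j => |v j|
  have hm0 : |v m| ≤ 0 := by
    nlinarith [hv m, mul_le_mul_of_nonneg_left (hm (f m)) hβ0, abs_nonneg (v m)]
  exact abs_nonpos_iff.mp ((hm i).trans hm0)

section LinearAlgebra

variable {V : Type*} [Fintype V] [DecidableEq V] {β : ℝ}

theorem R1_mulVec (x : V → V) (u : V → ℝ) : R1 x *ᵥ u = u ∘ x := by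
  ext i
  simp [R1, mulVec, dotProduct]

theorem one_sub_smul_R1_mulVec (x : V → V) (u : V → ℝ) :
    (1 - β • R1 x) *ᵥ u = u - β • (u ∘ x) := by
  rw [sub_mulVec, one_mulVec, smul_mulVec, R1_mulVec]

theorem isUnit_det_one_sub_smul_R1 (hβ0 : 0 ≤ β) (hβ1 : β < 1) (x : V → V) :
    IsUnit (1 - β • R1 x).det := by
  rw [isUnit_iff_ne_zero, Ne, ← exists_mulVec_eq_zero_iff]
  rintro ⟨v, hv0, hv⟩
  refine hv0 (eq_zero_of_abs_le_mul_abs_comp hβ0 hβ1 (f := x) fun i => ?_)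
  have hi : v i = β * v (x i) := by
    simpa [one_sub_smul_R1_mulVec, sub_eq_zero] using congrFun hv i
  rw [hi, abs_mul, abs_of_nonneg hβ0]

theorem exists_eq_add_mul_comp (hβ0 : 0 ≤ β) (hβ1 : β < 1) (f : V → V) (g : V → ℝ) :
    ∃ u : V → ℝ, ∀ i, u i = g i + β * u (f i) := by
  refine ⟨(1 - β • R1 f)⁻¹ *ᵥ g, fun i => ?_⟩
  have h := congrFun (mulVec_mulVec g (1 - β • R1 f) (1 - β • R1 f)⁻¹) i
  rw [mul_nonsing_inv _ (isUnit_det_one_sub_smul_R1 hβ0 hβ1 f), one_mulVec,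
    one_sub_smul_R1_mulVec] at h
  simp only [Pi.sub_apply, Pi.smul_apply, Function.comp_apply, smul_eq_mul] at h
  linarith

theorem util1_eq_sum_mul (hβ0 : 0 ≤ β) (hβ1 : β < 1) (η : V → ℝ) (x : V → V) (s : V)
    {u : V → ℝ} (hu : ∀ i, u i = (if i = s then 1 else 0) + β * u (x i)) :
    util1 β η x s = (1 - β) * ∑ i, η i * u i := by
  set A := 1 - β • R1 x
  have hAu : A *ᵥ u = Pi.single s 1 := by
    ext i
    rw [one_sub_smul_R1_mulVec, Pi.single_apply]
    simp only [Pi.sub_apply, Pi.smul_apply, Function.comp_apply, smul_eq_mul]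
    linarith [hu i]
  have hAt : 1 - β • (R1 x)ᵀ = Aᵀ := by
    rw [transpose_sub, transpose_smul, transpose_one]
  have hunit : IsUnit Aᵀ.det := by
    rw [det_transpose]; exact isUnit_det_one_sub_smul_R1 hβ0 hβ1 x
  have key : (Aᵀ⁻¹ *ᵥ η) s = u ⬝ᵥ η := by
    calc (Aᵀ⁻¹ *ᵥ η) s = (A *ᵥ u) ⬝ᵥ (Aᵀ⁻¹ *ᵥ η) := by simp [hAu]
      _ = u ⬝ᵥ (Aᵀ *ᵥ (Aᵀ⁻¹ *ᵥ η)) := by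
        rw [dotProduct_comm, dotProduct_mulVec, mulVec_transpose, dotProduct_comm]
      _ = u ⬝ᵥ η := by rw [mulVec_mulVec, mul_nonsing_inv _ hunit, one_mulVec]
  rw [util1, hAt, Pi.smul_apply, key, smul_eq_mul, dotProduct]
  simp only [mul_comm (u _)]

end LinearAlgebra

/-- `h i` is the discounted first-passage value `β ^ τ` of the walk `i, x i, x (x i), …` to
`s` (`0` if it never arrives); it does not depend on the out-link of `s` itself. -/
structure IsHittingDiscount {V : Type*} (β : ℝ) (x : V → V) (s : V) (h : V → ℝ) : Prop where
  apply_self : h s = 1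
  apply_of_ne : ∀ i, i ≠ s → h i = β * h (x i)

theorem exists_isHittingDiscount {V : Type*} [Fintype V] [DecidableEq V] {β : ℝ} (hβ0 : 0 ≤ β)
    (hβ1 : β < 1) (x : V → V) (s : V) :
    ∃ h, IsHittingDiscount β x s h := by
  -- with a self-loop at `s`, the value `1` at `s` becomes the fixed point of `t = (1 - β) + β t`
  obtain ⟨h, hh⟩ := exists_eq_add_mul_comp hβ0 hβ1 (update x s s)
    (fun i => if i = s then 1 - β else 0)
  refine ⟨h, ?_, fun i hi => by simpa [hi] using hh i⟩
  have hs : (1 - β) * (h s - 1) = 0 := by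
    have := hh s
    simp only [if_pos, update_self] at this
    linarith
  simpa [sub_eq_zero, (sub_pos.mpr hβ1).ne'] using hs

namespace IsHittingDiscount

variable {V : Type*} {β : ℝ} {x : V → V} {s : V} {h : V → ℝ}

theorem apply_eq_of_apply_eq (hh : IsHittingDiscount β x s h) {b : V} (hb : b ≠ s)
    (hxb : x b = s) : h b = β := by
  rw [hh.apply_of_ne b hb, hxb, hh.apply_self, mul_one]

variable [Finite V]

theorem nonneg (hh : IsHittingDiscount β x s h) (hβ0 : 0 ≤ β) (hβ1 : β < 1) (i : V) :
    0 ≤ h i := by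
  have : Nonempty V := ⟨i⟩
  obtain ⟨m, hm⟩ := Finite.exists_min h
  refine le_trans ?_ (hm i)
  by_cases hms : m = s
  · rw [hms, hh.apply_self]; exact zero_le_one
  · nlinarith [hh.apply_of_ne m hms, mul_le_mul_of_nonneg_left (hm (x m)) hβ0]

theorem le_one (hh : IsHittingDiscount β x s h) (hβ0 : 0 ≤ β) (hβ1 : β < 1) (i : V) :
    h i ≤ 1 := by
  have : Nonempty V := ⟨i⟩
  obtain ⟨m, hm⟩ := Finite.exists_max h
  refine (hm i).trans ?_
  by_cases hms : m = s
  · rw [hms, hh.apply_self]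
  · nlinarith [hh.apply_of_ne m hms, mul_le_mul_of_nonneg_left (hm (x m)) hβ0]

theorem apply_lt_of_apply_ne (hh : IsHittingDiscount β x s h) (hβ0 : 0 < β) (hβ1 : β < 1)
    {b : V} (hb : b ≠ s) (hxb : x b ≠ s) : h b < β := by
  have hxxb := hh.le_one hβ0.le hβ1 (x (x b))
  rw [hh.apply_of_ne b hb, hh.apply_of_ne (x b) hxb]
  nlinarith [mul_le_mul_of_nonneg_left hxxb hβ0.le]

theorem apply_eq_zero (hh : IsHittingDiscount β x s h) (hβ0 : 0 ≤ β) (hβ1 : β < 1)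
    (hs : ∀ t, t ≠ s → x t ≠ s) {b : V} (hb : b ≠ s) : h b = 0 := by
  classical
  have hv := eq_zero_of_abs_le_mul_abs_comp hβ0 hβ1 (f := x)
    (v := fun i => if i = s then 0 else h i) fun i => by
      by_cases his : i = s
      · simp only [his, if_true, abs_zero]; positivity
      · simp [his, hs i his, hh.apply_of_ne i his, abs_mul, abs_of_nonneg hβ0]
  simpa [hb] using congrFun hv b

end IsHittingDiscount

section BestResponse

variable {V : Type*} [Fintype V] [DecidableEq V] {β : ℝ} {η : V → ℝ} {x : V → V} {s : V}
  {h : V → ℝ}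

theorem IsHittingDiscount.util1_update (hh : IsHittingDiscount β x s h) (hβ0 : 0 ≤ β)
    (hβ1 : β < 1) (η : V → ℝ) (b : V) :
    util1 β η (update x s b) s = (1 - β) * (∑ i, η i * h i) / (1 - β * h b) := by
  have hb : 0 < 1 - β * h b := by nlinarith [hh.le_one hβ0 hβ1 b]
  rw [util1_eq_sum_mul hβ0 hβ1 η _ s (u := fun i => h i / (1 - β * h b)) fun i => ?_,
    mul_div_assoc, Finset.sum_div]
  · simp only [mul_div_assoc]
  · by_cases his : i = s
    · subst his
      rw [update_self, if_pos rfl, hh.apply_self]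
      field_simp
      ring
    · rw [update_of_ne his, if_neg his, hh.apply_of_ne i his]
      ring

theorem IsHittingDiscount.br1_eq (hh : IsHittingDiscount β x s h) (hβ0 : 0 < β) (hβ1 : β < 1)
    (hη : ∀ i, 0 < η i) : br1 β η x s = {a | a ≠ s ∧ ∀ b, b ≠ s → h b ≤ h a} := by
  have hK : 0 < (1 - β) * ∑ i, η i * h i := by
    refine mul_pos (sub_pos.mpr hβ1) (Finset.sum_pos' (fun i _ => ?_) ⟨s, mem_univ s, ?_⟩)
    · exact mul_nonneg (hη i).le (hh.nonneg hβ0.le hβ1 i)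
    · rw [hh.apply_self, mul_one]; exact hη s
  have hpos : ∀ b, 0 < 1 - β * h b := fun b => by nlinarith [hh.le_one hβ0.le hβ1 b]
  ext a
  simp only [br1, Set.mem_ofPred_eq, hh.util1_update hβ0.le hβ1,
    div_le_div_iff_of_pos_left hK (hpos _) (hpos _), sub_le_sub_iff_left,
    mul_le_mul_iff_right₀ hβ0]

theorem br1_eq_of_apply_eq (hβ0 : 0 < β) (hβ1 : β < 1) (hη : ∀ i, 0 < η i) {t : V}
    (ht : t ≠ s) (hts : x t = s) : br1 β η x s = {a | a ≠ s ∧ x a = s} := by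
  obtain ⟨h, hh⟩ := exists_isHittingDiscount hβ0.le hβ1 x s
  rw [hh.br1_eq hβ0 hβ1 hη]
  ext a
  simp only [Set.mem_ofPred_eq, and_congr_right_iff]
  intro ha
  refine ⟨fun hmax => ?_, fun hxa b hb => ?_⟩
  · by_contra hxa
    have := hmax t ht
    rw [hh.apply_eq_of_apply_eq ht hts] at this
    exact (hh.apply_lt_of_apply_ne hβ0 hβ1 ha hxa).not_ge this
  · rw [hh.apply_eq_of_apply_eq ha hxa]
    by_cases hxb : x b = s
    · rw [hh.apply_eq_of_apply_eq hb hxb]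
    · exact (hh.apply_lt_of_apply_ne hβ0 hβ1 hb hxb).le

theorem br1_eq_of_forall_apply_ne (hβ0 : 0 < β) (hβ1 : β < 1) (hη : ∀ i, 0 < η i)
    (hs : ∀ t, t ≠ s → x t ≠ s) : br1 β η x s = {a | a ≠ s} := by
  obtain ⟨h, hh⟩ := exists_isHittingDiscount hβ0.le hβ1 x s
  rw [hh.br1_eq hβ0 hβ1 hη]
  ext a
  simp only [Set.mem_ofPred_eq, and_iff_left_iff_imp]
  intro ha b hb
  rw [hh.apply_eq_zero hβ0.le hβ1 hs ha, hh.apply_eq_zero hβ0.le hβ1 hs hb]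

end BestResponse

theorem update_apply_ne_self {V : Type*} [DecidableEq V] {x : V → V} (hx : ∀ i, x i ≠ i)
    {w t : V} (ht : t ≠ w) (i : V) :
    update x w t i ≠ i := by
  by_cases hi : i = w
  · subst hi; rwa [update_self]
  · rw [update_of_ne hi]; exact hx i

section Dynamics

variable {V : Type*} [Fintype V] [DecidableEq V] {β : ℝ} {η : V → ℝ} {x : V → V}

def matched (x : V → V) : Finset V :=
  univ.filter fun i => x (x i) = i

theorem mem_matched {i : V} : i ∈ matched x ↔ x (x i) = i := by
  simp [matched]

theorem matched_subset_update {w : V} (hw : w ∉ matched x) (a : V) :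
    matched x ⊆ matched (update x w a) := by
  intro i hi
  rw [mem_matched] at hi hw ⊢
  have hiw : i ≠ w := by rintro rfl; exact hw hi
  have hxiw : x i ≠ w := by rintro rfl; exact hw (by rw [hi])
  rw [update_of_ne hiw, update_of_ne hxiw, hi]

theorem matched_ssubset_update {w a : V} (hw : w ∉ matched x) (ha : a ≠ w) (hxa : x a = w) :
    matched x ⊂ matched (update x w a) :=
  Finset.ssubset_iff_subset_ne.mpr ⟨matched_subset_update hw a, fun h =>
    hw (h ▸ mem_matched.mpr (by rw [update_self, update_of_ne ha, hxa]))⟩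

theorem even_card_matched (hx : ∀ i, x i ≠ i) : Even (matched x).card := by
  let g : V → V := fun i => if x (x i) = i then x i else i
  have hg : Involutive g := fun i => by by_cases hi : x (x i) = i <;> simp [g, hi]
  have hsupp : (hg.toPerm g).support = matched x := by
    ext i
    by_cases hi : x (x i) = i <;> simp [g, mem_matched, hi, hx i]
  rw [← hsupp, even_iff_two_dvd]
  exact Equiv.Perm.two_dvd_card_support (by ext i; simp [sq, hg i])

theorem step1_update_of_apply_eq (hβ0 : 0 < β) (hβ1 : β < 1) (hη : ∀ i, 0 < η i) {w t : V}
    (ht : t ≠ w) (htw : x t = w) : step1 β η x (update x w t) :=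
  ⟨w, t, by rw [br1_eq_of_apply_eq hβ0 hβ1 hη ht htw]; exact ⟨ht, htw⟩, rfl⟩

theorem step1_eq_of_involutive (hβ0 : 0 < β) (hβ1 : β < 1) (hη : ∀ i, 0 < η i)
    (hx : ∀ i, x i ≠ i) (hinv : Involutive x) {y : V → V} (hxy : step1 β η x y) : y = x := by
  obtain ⟨s, a, ha, rfl⟩ := hxy
  rw [br1_eq_of_apply_eq hβ0 hβ1 hη (hx s) (hinv s)] at ha
  rw [← (congrArg x ha.2).symm.trans (hinv a), update_eq_self]

theorem exists_reflTransGen_matched_ssubset (hβ0 : 0 < β) (hβ1 : β < 1)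
    (hη : ∀ i, 0 < η i) (hn : Even (Fintype.card V)) (hx : ∀ i, x i ≠ i) {u : V}
    (hu : u ∉ matched x) :
    ∃ y, (∀ i, y i ≠ i) ∧ matched x ⊂ matched y ∧ Relation.ReflTransGen (step1 β η) x y := by
  by_cases hin : ∃ w ∉ matched x, ∃ t, t ≠ w ∧ x t = w
  · obtain ⟨w, hw, t, ht, htw⟩ := hin
    exact ⟨_, update_apply_ne_self hx ht, matched_ssubset_update hw ht htw,
      .single (step1_update_of_apply_eq hβ0 hβ1 hη ht htw)⟩
  push Not at hin
  obtain ⟨v, hv, hvu⟩ : ∃ v ∈ (matched x)ᶜ, v ≠ u := by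
    refine Finset.exists_mem_ne ?_ u
    have hpos : 0 < (matched x)ᶜ.card := Finset.card_pos.mpr ⟨u, Finset.mem_compl.mpr hu⟩
    obtain ⟨r, hr⟩ := (Finset.card_compl (matched x) ▸ hn.tsub (even_card_matched hx))
    omega
  rw [Finset.mem_compl] at hv
  have hstep : step1 β η x (update x u v) :=
    ⟨u, v, by rw [br1_eq_of_forall_apply_ne hβ0 hβ1 hη (hin u hu)]; exact hvu, rfl⟩
  have hv' : v ∉ matched (update x u v) := by
    rw [mem_matched] at hv ⊢
    rwa [update_of_ne hvu, update_of_ne (hin u hu v hvu)]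
  have hvu' : update x u v u = v := update_self u v x
  exact ⟨_, update_apply_ne_self (update_apply_ne_self hx hvu) hvu.symm,
    (matched_subset_update hu v).trans_ssubset (matched_ssubset_update hv' hvu.symm hvu'),
    .tail (.single hstep) (step1_update_of_apply_eq hβ0 hβ1 hη hvu.symm hvu')⟩

theorem exists_reflTransGen_involutive (hβ0 : 0 < β) (hβ1 : β < 1) (hη : ∀ i, 0 < η i)
    (hn : Even (Fintype.card V)) (x : V → V) (hx : ∀ i, x i ≠ i) :
    ∃ y, ((∀ i, y i ≠ i) ∧ Involutive y) ∧ Relation.ReflTransGen (step1 β η) x y := by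
  by_cases hall : ∀ u, u ∈ matched x
  · exact ⟨x, ⟨hx, fun i => mem_matched.mp (hall i)⟩, .refl⟩
  push Not at hall
  obtain ⟨u, hu⟩ := hall
  obtain ⟨y, hy, hxy, hreach⟩ := exists_reflTransGen_matched_ssubset hβ0 hβ1 hη hn hx hu
  obtain ⟨z, hz, hyz⟩ := exists_reflTransGen_involutive hβ0 hβ1 hη hn y hy
  exact ⟨z, hz, hreach.trans hyz⟩
termination_by (matched x)ᶜ.card
decreasing_by exact Finset.card_lt_card (Finset.compl_ssubset_compl.mpr hxy)

end Dynamics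

theorem Relation.ReflTransGen.eq_of_forall_eq {α : Type*} {r : α → α → Prop} {a b : α}
    (hr : ∀ c, r a c → c = a) (hab : Relation.ReflTransGen r a b) : b = a := by
  induction hab with
  | refl => rfl
  | tail _ hbc ih => subst ih; exact hr _ hbc

theorem limit_set_even_m1_general
    {V : Type*} [Fintype V] [DecidableEq V]
    (β : ℝ) (hβ0 : 0 < β) (hβ1 : β < 1)
    (η : V → ℝ) (hη : ∀ i, 0 < η i)
    (hn : Even (Fintype.card V)) :
    (∀ x : V → V, ((∀ i, x i ≠ i) ∧ ∀ i, x (x i) = i) →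
      ∀ y, step1 β η x y → ((∀ i, y i ≠ i) ∧ ∀ i, y (y i) = i)) ∧
    (∀ x : V → V, (∀ i, x i ≠ i) →
      ∃ y, ((∀ i, y i ≠ i) ∧ ∀ i, y (y i) = i) ∧
        Relation.ReflTransGen (step1 β η) x y) ∧
    (∀ T : Set (V → V),
      (∀ x ∈ T, ∀ y, step1 β η x y → y ∈ T) →
      (∀ x : V → V, (∀ i, x i ≠ i) → ∃ y ∈ T, Relation.ReflTransGen (step1 β η) x y) →
      ∀ x : V → V, ((∀ i, x i ≠ i) ∧ ∀ i, x (x i) = i) → x ∈ T) := by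
  have absorbing : ∀ x : V → V, ((∀ i, x i ≠ i) ∧ ∀ i, x (x i) = i) →
      ∀ y, step1 β η x y → y = x :=
    fun x hx _ => step1_eq_of_involutive hβ0 hβ1 hη hx.1 hx.2
  refine ⟨fun x hx y hxy => absorbing x hx y hxy ▸ hx,
    exists_reflTransGen_involutive hβ0 hβ1 hη hn, fun T _ hreach x hx => ?_⟩
  obtain ⟨y, hyT, hxy⟩ := hreach x hx.1
  rwa [hxy.eq_of_forall_eq (absorbing x hx)] at hyT

/-- for `n` even, the limit set `N*` of the best response dynamics of
`Γ(V,β,η,1)` is the set `S` of profiles whose graph is a disjoint union of `n/2`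
2-cliques: `S` is trapping, globally reachable, and contained in every trapping
globally reachable set of configurations. -/
theorem limit_set_even_m1
    {V : Type*} [Fintype V] [DecidableEq V]
    (β : ℝ) (hβ0 : 0 < β) (hβ1 : β < 1)
    (η : V → ℝ) (hη : ∀ i, 0 < η i) (hηsum : ∑ i, η i = 1)
    (hn : Even (Fintype.card V)) :
    (∀ x : V → V, ((∀ i, x i ≠ i) ∧ ∀ i, x (x i) = i) →
      ∀ y, step1 β η x y → ((∀ i, y i ≠ i) ∧ ∀ i, y (y i) = i)) ∧
    (∀ x : V → V, (∀ i, x i ≠ i) →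
      ∃ y, ((∀ i, y i ≠ i) ∧ ∀ i, y (y i) = i) ∧
        Relation.ReflTransGen (step1 β η) x y) ∧
    (∀ T : Set (V → V),
      (∀ x ∈ T, ∀ y, step1 β η x y → y ∈ T) →
      (∀ x : V → V, (∀ i, x i ≠ i) → ∃ y ∈ T, Relation.ReflTransGen (step1 β η) x y) →
      ∀ x : V → V, ((∀ i, x i ≠ i) ∧ ∀ i, x (x i) = i) → x ∈ T) :=
  limit_set_even_m1_general β hβ0 hβ1 η hη hn
end

section
/- In the centrality game with m = 2, if for some configuration x and nodes i ≠ s the expected hitting time attains the bound τ_i^s(x) = 1/((1−β)η_s), then s has empty in-neighborhood in G(x). -/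
open Finset Matrix

noncomputable def P2 {V : Type*} [DecidableEq V]
    (β : ℝ) (η : V → ℝ) (x : V → Finset V) (i j : V) : ℝ :=
  β * (if j ∈ x i then (1 : ℝ) / 2 else 0) + (1 - β) * η j

/-!
Let `c = (1-β)η_s`. Every row of `P(x)` puts mass at least `c` on `s`, so from a maximiser of `τ`
the first-step equation gives `c · max τ ≤ 1`, i.e. `τ ≤ 1/c`. If `τ_i = 1/c`, the first-step
equation at `i` averages `τ` over a row with full support, so `τ ≡ 1/c` off `s`. Feeding this back
into the first-step equation at any `j ≠ s` forces `P(x)_{js} = c` exactly, which leaves no room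
for the term `β/2` that an out-link `j → s` would contribute.
-/

section Row

variable {V : Type*} [Fintype V] [DecidableEq V] {p τ : V → ℝ} {s : V} {M : ℝ}

lemma sum_erase_eq_one_sub (hp : ∑ k, p k = 1) (s : V) :
    ∑ k ∈ univ.erase s, p k = 1 - p s := by
  rw [← hp, ← add_sum_erase univ p (mem_univ s)]
  ring

lemma sum_mul_eq_sum_erase (hτs : τ s = 0) :
    ∑ k, p k * τ k = ∑ k ∈ univ.erase s, p k * τ k :=
  (sum_erase univ (by simp [hτs])).symm

lemma sum_mul_le_of_le (hp0 : ∀ k, 0 ≤ p k) (hp : ∑ k, p k = 1) (hτs : τ s = 0)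
    (hM : ∀ k, k ≠ s → τ k ≤ M) :
    ∑ k, p k * τ k ≤ (1 - p s) * M := by
  rw [sum_mul_eq_sum_erase hτs, ← sum_erase_eq_one_sub hp s, sum_mul]
  exact sum_le_sum fun k hk => mul_le_mul_of_nonneg_left (hM k (ne_of_mem_erase hk)) (hp0 k)

lemma sum_mul_lt_of_le_of_lt (hp0 : ∀ k, 0 < p k) (hp : ∑ k, p k = 1) (hτs : τ s = 0)
    (hM : ∀ k, k ≠ s → τ k ≤ M) {k₀ : V} (hk₀ : k₀ ≠ s) (hlt : τ k₀ < M) :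
    ∑ k, p k * τ k < (1 - p s) * M := by
  rw [sum_mul_eq_sum_erase hτs, ← sum_erase_eq_one_sub hp s, sum_mul]
  exact sum_lt_sum (fun k hk => mul_le_mul_of_nonneg_left (hM k (ne_of_mem_erase hk)) (hp0 k).le)
    ⟨k₀, mem_erase.2 ⟨hk₀, mem_univ _⟩, mul_lt_mul_of_pos_left hlt (hp0 k₀)⟩

lemma sum_mul_eq_of_eq (hp : ∑ k, p k = 1) (hτs : τ s = 0) (hM : ∀ k, k ≠ s → τ k = M) :
    ∑ k, p k * τ k = (1 - p s) * M := by
  rw [sum_mul_eq_sum_erase hτs, ← sum_erase_eq_one_sub hp s, sum_mul]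
  exact sum_congr rfl fun k hk => by rw [hM k (ne_of_mem_erase hk)]

end Row

structure IsHittingTime {V : Type*} [Fintype V] (P : Matrix V V ℝ) (s : V) (τ : V → ℝ) : Prop where
  eq_zero : τ s = 0
  eq_one_add : ∀ i, i ≠ s → τ i = 1 + ∑ j, P i j * τ j

namespace IsHittingTime

variable {V : Type*} [Fintype V] [DecidableEq V] {P : Matrix V V ℝ} {s : V} {τ : V → ℝ} {c : ℝ}

theorem le_one_div (h : IsHittingTime P s τ) (hP : P ∈ rowStochastic ℝ V) (hc : 0 < c)
    (hPc : ∀ j, c ≤ P j s) (k : V) : τ k ≤ 1 / c := by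
  obtain ⟨j₀, -, hj₀⟩ := exists_max_image univ τ ⟨s, mem_univ s⟩
  have hM : ∀ k, τ k ≤ τ j₀ := fun k => hj₀ k (mem_univ k)
  have hM0 : 0 ≤ τ j₀ := h.eq_zero ▸ hM s
  suffices c * τ j₀ ≤ 1 from (hM k).trans (by rwa [le_div_iff₀ hc, mul_comm])
  by_cases hj₀s : j₀ = s
  · simp [hj₀s, h.eq_zero]
  have hstep : τ j₀ ≤ 1 + (1 - P j₀ s) * τ j₀ := by
    have hsum := sum_mul_le_of_le (fun k => nonneg_of_mem_rowStochastic hP)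
      (sum_row_of_mem_rowStochastic hP j₀) h.eq_zero fun k _ => hM k
    linarith [h.eq_one_add j₀ hj₀s]
  nlinarith [hPc j₀]

theorem eq_one_div_of_eq_one_div (h : IsHittingTime P s τ) (hP : P ∈ rowStochastic ℝ V) (hc : 0 < c)
    (hPc : ∀ j, c ≤ P j s) {i : V} (hpos : ∀ k, 0 < P i k) (hi : τ i = 1 / c) :
    ∀ k, k ≠ s → τ k = 1 / c := by
  have his : i ≠ s := fun his => by
    have : (0 : ℝ) < 1 / c := by positivity
    rw [his, h.eq_zero] at hi
    linarith
  intro k hk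
  refine (h.le_one_div hP hc hPc k).eq_of_not_lt fun hlt => ?_
  have hsum := sum_mul_lt_of_le_of_lt hpos (sum_row_of_mem_rowStochastic hP i) h.eq_zero
    (fun k _ => h.le_one_div hP hc hPc k) hk hlt
  have hstep := h.eq_one_add i his
  have hcc : c * (1 / c) = 1 := by field_simp
  nlinarith [hPc i]

theorem mul_eq_one_of_forall_eq (h : IsHittingTime P s τ) (hP : P ∈ rowStochastic ℝ V) {M : ℝ}
    (hM : ∀ k, k ≠ s → τ k = M) {j : V} (hj : j ≠ s) : P j s * M = 1 := by
  have hstep := h.eq_one_add j hj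
  rw [sum_mul_eq_of_eq (sum_row_of_mem_rowStochastic hP j) h.eq_zero hM, hM j hj] at hstep
  linarith

end IsHittingTime

section P2

variable {V : Type*} [DecidableEq V] {β : ℝ} {η : V → ℝ} {x : V → Finset V}

lemma le_P2 (hβ : 0 ≤ β) (j k : V) : (1 - β) * η k ≤ P2 β η x j k := by
  unfold P2
  have : 0 ≤ β * (if k ∈ x j then (1 : ℝ) / 2 else 0) := by positivity
  linarith

lemma P2_of_mem {j k : V} (hk : k ∈ x j) : P2 β η x j k = β / 2 + (1 - β) * η k := by
  simp [P2, hk, div_eq_mul_one_div β]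

lemma P2_pos (hβ0 : 0 ≤ β) (hβ1 : β < 1) (hη : ∀ i, 0 < η i) (j k : V) : 0 < P2 β η x j k :=
  (mul_pos (sub_pos.2 hβ1) (hη k)).trans_le (le_P2 hβ0 j k)

lemma P2_mem_rowStochastic [Fintype V] (hβ0 : 0 ≤ β) (hβ1 : β < 1) (hη : ∀ i, 0 < η i)
    (hηsum : ∑ i, η i = 1) (hx : ∀ i, (x i).card = 2) :
    (P2 β η x : Matrix V V ℝ) ∈ rowStochastic ℝ V := by
  refine mem_rowStochastic_iff_sum.2 ⟨fun j k => (P2_pos hβ0 hβ1 hη j k).le, fun j => ?_⟩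
  simp only [P2, sum_add_distrib, ← mul_sum, sum_ite_mem, univ_inter, sum_const, hx j, hηsum]
  norm_num

end P2

theorem hitting_time_bound_attained_empty_in_neighborhood_m2_general
    {V : Type*} [Fintype V] [DecidableEq V]
    (β : ℝ) (hβ0 : 0 < β) (hβ1 : β < 1)
    (η : V → ℝ) (hη : ∀ i, 0 < η i) (hηsum : ∑ i, η i = 1)
    (x : V → Finset V) (hx : ∀ i, (x i).card = 2 ∧ i ∉ x i)
    (s : V) (τ : V → ℝ)
    (hτs : τ s = 0)
    (hτ : ∀ i, i ≠ s → τ i = 1 + ∑ j, P2 β η x i j * τ j)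
    (i : V) (heq : τ i = 1 / ((1 - β) * η s)) :
    ∀ j, s ∉ x j := by
  have h : IsHittingTime (P2 β η x) s τ := ⟨hτs, hτ⟩
  have hP := P2_mem_rowStochastic hβ0.le hβ1 hη hηsum fun i => (hx i).1
  have hc : 0 < (1 - β) * η s := mul_pos (sub_pos.2 hβ1) (hη s)
  have hflat := h.eq_one_div_of_eq_one_div hP hc (le_P2 hβ0.le · s) (P2_pos hβ0.le hβ1 hη i) heq
  intro j hj
  have hjs : j ≠ s := by rintro rfl; exact (hx j).2 hj
  have hone := h.mul_eq_one_of_forall_eq hP hflat hjs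
  rw [P2_of_mem hj, add_mul, mul_one_div_cancel hc.ne'] at hone
  have : 0 < β / 2 * (1 / ((1 - β) * η s)) := by positivity
  linarith

/-- in `Γ(V,β,η,2)`, if some hitting time on `s` attains the bound
`1/((1-β)η_s)`, then `s` has empty in-neighborhood in `G(x)`. -/
theorem hitting_time_bound_attained_empty_in_neighborhood_m2
    {V : Type*} [Fintype V] [DecidableEq V]
    (β : ℝ) (hβ0 : 0 < β) (hβ1 : β < 1)
    (η : V → ℝ) (hη : ∀ i, 0 < η i) (hηsum : ∑ i, η i = 1)
    (x : V → Finset V) (hx : ∀ i, (x i).card = 2 ∧ i ∉ x i)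
    (s : V) (τ : V → ℝ)
    (hτs : τ s = 0)
    (hτ : ∀ i, i ≠ s → τ i = 1 + ∑ j, P2 β η x i j * τ j)
    (i : V) (hi : i ≠ s) (heq : τ i = 1 / ((1 - β) * η s)) :
    ∀ j, s ∉ x j :=
  hitting_time_bound_attained_empty_in_neighborhood_m2_general β hβ0 hβ1 η hη hηsum x hx s τ hτs hτ
    i heq
end

section
/- In the centrality game with m = 2, if x is a configuration, k ∈ N_s^-(x), and the hitting-time upper bounds are attained with equality, i.e., τ_k^s(x) = (1−β/2)/((1−β)(η_s + (β/2)η_k)) and τ_i^s(x) = 1/((1−β)(η_s + (β/2)η_k)) for all i ≠ k, s, then the two-step in-neighborhood N_s^{-2}(x) equals {k}. -/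
open Finset Matrix

/-!
Write `D = (1-β)(η_s + (β/2)η_k)` and `T = 1/D`. The two equalities say that `τ = T` off `{s, k}`,
`τ_s = 0` and `τ_k = (1-β/2)T`, so `τ ≤ T` everywhere and the `η`-mean of `τ` is known explicitly.
Plugging this into the hitting-time equation at a node `i ∉ {s, k}` forces the two successors of `i`
to have total hitting time `2T`, hence both are at the maximum `T`, i.e. neither is `s` or `k`.
Thus no node outside `{s, k}` points to `s` or to `k`, which leaves `k` as the only node other
than `s` within in-distance 2 of `s`.
-/

lemma sum_P2_mul {V : Type*} [Fintype V] [DecidableEq V]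
    (β : ℝ) (η : V → ℝ) (x : V → Finset V) (i : V) (f : V → ℝ) :
    ∑ j, P2 β η x i j * f j = β / 2 * ∑ j ∈ x i, f j + (1 - β) * ∑ j, η j * f j := by
  simp only [P2, add_mul, sum_add_distrib, mul_ite, mul_zero, ite_mul, zero_mul,
    ← sum_filter, filter_mem_eq_inter, univ_inter, mul_sum]
  congr 1 <;> exact sum_congr rfl fun j _ => by ring

lemma sum_mul_sub_ite_sub_ite {V : Type*} [Fintype V] [DecidableEq V]
    {η : V → ℝ} (hηsum : ∑ i, η i = 1) (β T : ℝ) (s k : V) :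
    ∑ j, η j * (T - (if j = s then T else 0) - (if j = k then β / 2 * T else 0)) =
      T - (η s + β / 2 * η k) * T := by
  simp only [mul_sub, mul_ite, mul_zero, sum_sub_distrib, sum_ite_eq', mem_univ, if_true,
    ← sum_mul, hηsum]
  ring

lemma hitting_eq_bound_of_mem_of_eq_bound {V : Type*} [Fintype V] [DecidableEq V]
    {β T : ℝ} {η τ : V → ℝ} {x : V → Finset V} {i : V} (hβ0 : 0 < β)
    (hτi : τ i = 1 + ∑ j, P2 β η x i j * τ j)
    (hmean : (1 - β) * ∑ j, η j * τ j = (1 - β) * T - 1)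
    (hi : τ i = T) (hcard : (x i).card = 2) (hle : ∀ j, τ j ≤ T) :
    ∀ j ∈ x i, τ j = T := by
  have hsum : ∑ j ∈ x i, τ j = ∑ _j ∈ x i, T := by
    rw [sum_P2_mul, hmean, hi] at hτi
    rw [sum_const, hcard, nsmul_eq_mul, Nat.cast_ofNat]
    exact mul_left_cancel₀ (by positivity : β / 2 ≠ 0) (by linarith)
  exact (sum_eq_sum_iff_of_le fun j _ => hle j).mp hsum

lemma twoStepInNeighbors_eq_singleton {V : Type*} {x : V → Finset V} {s k : V}
    (hs : s ∉ x s) (hk : s ∈ x k)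
    (havoid : ∀ i, i ≠ s → i ≠ k → s ∉ x i ∧ k ∉ x i) :
    {i : V | i ≠ s ∧ (s ∈ x i ∨ ∃ t, s ∈ x t ∧ t ∈ x i)} = {k} := by
  have hks : k ≠ s := fun h => hs (h ▸ hk)
  have hin : ∀ t, s ∈ x t → t = k := fun t ht => by
    by_contra htk
    exact (havoid t (fun h => hs (h ▸ ht)) htk).1 ht
  ext i
  simp only [Set.mem_ofPred_eq, Set.mem_singleton_iff]
  constructor
  · rintro ⟨his, hsi | ⟨t, hst, hti⟩⟩
    · exact hin i hsi
    · obtain rfl := hin t hst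
      by_contra hik
      exact (havoid i his hik).2 hti
  · rintro rfl
    exact ⟨hks, Or.inl hk⟩

/-- in `Γ(V,β,η,2)`, if `k ∈ N_s^-(x)` and the hitting-time bounds
`T1 = (1-β/2)/((1-β)(η_s+(β/2)η_k))` and `T2 = 1/((1-β)(η_s+(β/2)η_k))` are attained
with equality (at `k` and at every `i ≠ k, s` respectively), then the two-step
in-neighborhood of `s` equals `{k}`. -/
theorem hitting_time_bounds_attained_single_in_neighbor_m2
    {V : Type*} [Fintype V] [DecidableEq V]
    (β : ℝ) (hβ0 : 0 < β) (hβ1 : β < 1)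
    (η : V → ℝ) (hη : ∀ i, 0 < η i) (hηsum : ∑ i, η i = 1)
    (x : V → Finset V) (hx : ∀ i, (x i).card = 2 ∧ i ∉ x i)
    (s : V) (τ : V → ℝ)
    (hτs : τ s = 0)
    (hτ : ∀ i, i ≠ s → τ i = 1 + ∑ j, P2 β η x i j * τ j)
    (k : V) (hk : s ∈ x k)
    (heqk : τ k = (1 - β / 2) / ((1 - β) * (η s + (β / 2) * η k)))
    (heq : ∀ i, i ≠ k → i ≠ s → τ i = 1 / ((1 - β) * (η s + (β / 2) * η k))) :
    {i : V | i ≠ s ∧ (s ∈ x i ∨ ∃ t, s ∈ x t ∧ t ∈ x i)} = {k} := by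
  have hks : k ≠ s := fun h => (hx s).2 (h ▸ hk)
  have hD : 0 < (1 - β) * (η s + β / 2 * η k) :=
    mul_pos (sub_pos.mpr hβ1) (by have := hη s; have := hη k; positivity)
  have hTpos : 0 < 1 / ((1 - β) * (η s + β / 2 * η k)) := by positivity
  have hDT := mul_one_div_cancel hD.ne'
  have hτk : τ k = 1 / ((1 - β) * (η s + β / 2 * η k)) -
      β / 2 * (1 / ((1 - β) * (η s + β / 2 * η k))) := by rw [heqk]; ring
  generalize 1 / ((1 - β) * (η s + β / 2 * η k)) = T at heq hTpos hDT hτk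
  have hprofile : ∀ j, τ j = T - (if j = s then T else 0) - (if j = k then β / 2 * T else 0) := by
    intro j
    by_cases hjs : j = s
    · subst hjs; simp [hτs, hks.symm]
    by_cases hjk : j = k
    · subst hjk; simp [hτk, hjs]
    · simp [heq j hjk hjs, hjs, hjk]
  have hmean : (1 - β) * ∑ j, η j * τ j = (1 - β) * T - 1 := by
    simp only [hprofile, sum_mul_sub_ite_sub_ite hηsum]
    linear_combination -hDT
  have hle : ∀ j, τ j ≤ T := fun j => by rw [hprofile j]; split_ifs <;> nlinarith
  refine twoStepInNeighbors_eq_singleton (hx s).2 hk fun i his hik => ?_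
  have hsucc :=
    hitting_eq_bound_of_mem_of_eq_bound hβ0 (hτ i his) hmean (heq i hik his) (hx i).1 hle
  refine ⟨fun hsi => ?_, fun hki => ?_⟩
  · linarith [hsucc s hsi]
  · nlinarith [hsucc k hki]
end

section
/- In the centrality game with m = 2, for any configuration x and node s, a node minimizing the hitting time to s lies in the in-neighborhood of s whenever that in-neighborhood is nonempty: if v₁ ∈ argmin_{i≠s} τ_i^s(x) and N_s^-(x) ≠ ∅, then v₁ ∈ N_s^-(x). -/
/-!
If `s ∉ x v₁`, the minimizer `v₁` enters `s` in one step only by teleportation, with probability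
`q = (1 - β) η s`, the smallest entry of column `s` of `P`. The hitting-time equation at `v₁` then
gives `q · min τ ≥ 1`, and the one at a maximizer `w` gives `q · max τ ≤ P w s · max τ ≤ 1`. An
in-neighbour `k` of `s` enters `s` in one step with the larger probability `q + β / 2`, and its
equation forces `q · τ k ≤ q + (1 - P k s) < 1 ≤ q · min τ`, which is absurd.
-/

open Finset Matrix

section HittingTime

variable {V : Type*} [Fintype V] [DecidableEq V]

lemma sum_mul_le_of_forall_ne_le {p f : V → ℝ} {s : V} {c : ℝ} (hp : ∀ j, 0 ≤ p j)
    (hsum : ∑ j, p j = 1) (hfs : f s = 0) (hc : ∀ j, j ≠ s → f j ≤ c) :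
    ∑ j, p j * f j ≤ (1 - p s) * c := by
  rw [← sum_erase univ (by rw [hfs, mul_zero]), ← hsum, ← sum_erase_eq_sub (mem_univ s), sum_mul]
  exact sum_le_sum fun j hj => mul_le_mul_of_nonneg_left (hc j (ne_of_mem_erase hj)) (hp j)

lemma le_sum_mul_of_forall_ne_le {p f : V → ℝ} {s : V} {c : ℝ} (hp : ∀ j, 0 ≤ p j)
    (hsum : ∑ j, p j = 1) (hfs : f s = 0) (hc : ∀ j, j ≠ s → c ≤ f j) :
    (1 - p s) * c ≤ ∑ j, p j * f j := by
  rw [← sum_erase univ (by rw [hfs, mul_zero]), ← hsum, ← sum_erase_eq_sub (mem_univ s), sum_mul]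
  exact sum_le_sum fun j hj => mul_le_mul_of_nonneg_left (hc j (ne_of_mem_erase hj)) (hp j)

/-- For a stochastic matrix `P` and the hitting times `τ` of `s`: if a minimizer `v` of `τ` has
the smallest one-step probability `P v s` of entering `s`, then it also has the largest one. -/
theorem le_of_minimizes_hittingTime {P : V → V → ℝ} {τ : V → ℝ} {s v k : V}
    (hP : ∀ i j, 0 ≤ P i j) (hrow : ∀ i, ∑ j, P i j = 1)
    (hτs : τ s = 0) (hτ : ∀ i, i ≠ s → τ i = 1 + ∑ j, P i j * τ j)
    (hv : v ≠ s) (hmin : ∀ i, i ≠ s → τ v ≤ τ i) (hcol : ∀ i, i ≠ s → P v s ≤ P i s)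
    (hk : k ≠ s) : P k s ≤ P v s := by
  obtain ⟨w, hw, hmax⟩ := exists_max_image (univ.erase s) τ ⟨v, mem_erase.2 ⟨hv, mem_univ v⟩⟩
  have hws : w ≠ s := ne_of_mem_erase hw
  have hmax' : ∀ j, j ≠ s → τ j ≤ τ w := fun j hj => hmax j (mem_erase.2 ⟨hj, mem_univ j⟩)
  have hv_lower := le_sum_mul_of_forall_ne_le (hP v) (hrow v) hτs hmin
  have hw_upper := sum_mul_le_of_forall_ne_le (hP w) (hrow w) hτs hmax'
  have hk_upper := sum_mul_le_of_forall_ne_le (hP k) (hrow k) hτs hmax'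
  have hqm : 1 ≤ P v s * τ v := by linarith [hτ v hv]
  have hτw : 0 ≤ τ w := by nlinarith [hmin w hws, hP v s]
  have hqM : P v s * τ w ≤ 1 :=
    (mul_le_mul_of_nonneg_right (hcol w hws) hτw).trans (by linarith [hτ w hws])
  have hPks : P k s ≤ 1 := hrow k ▸ single_le_sum (fun j _ => hP k j) (mem_univ s)
  have hτk : τ v ≤ 1 + (1 - P k s) * τ w := by linarith [hmin k hk, hτ k hk]
  nlinarith [hP v s, mul_le_mul_of_nonneg_left hqM (sub_nonneg.2 hPks)]

end HittingTime

section P2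

variable {V : Type*} [DecidableEq V] {β : ℝ} {η : V → ℝ} {x : V → Finset V}

lemma P2_nonneg (hβ0 : 0 ≤ β) (hβ1 : β ≤ 1) (hη : ∀ j, 0 ≤ η j) (i j : V) :
    0 ≤ P2 β η x i j := by
  unfold P2
  have := mul_nonneg (sub_nonneg.2 hβ1) (hη j)
  split_ifs <;> positivity

lemma sum_P2_eq_one [Fintype V] (hηsum : ∑ j, η j = 1) (hx : ∀ i, (x i).card = 2) (i : V) :
    ∑ j, P2 β η x i j = 1 := by
  simp only [P2, sum_add_distrib, ← mul_sum, hηsum, sum_ite_mem, univ_inter, sum_const, hx i]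
  ring

lemma P2_le_of_notMem {i k j : V} (hβ : 0 ≤ β) (hj : j ∉ x i) :
    P2 β η x i j ≤ P2 β η x k j := by
  unfold P2
  rw [if_neg hj]
  split_ifs <;> linarith

lemma P2_lt_of_notMem_of_mem {i k j : V} (hβ : 0 < β) (hi : j ∉ x i) (hk : j ∈ x k) :
    P2 β η x i j < P2 β η x k j := by
  unfold P2
  rw [if_neg hi, if_pos hk]
  linarith

end P2

/-- in `Γ(V,β,η,2)`, if the in-neighborhood of `s` is nonempty, then any
node minimizing the hitting time to `s` (among nodes `≠ s`) is an in-neighbor of `s`. -/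
theorem hitting_time_minimizer_is_in_neighbor_m2
    {V : Type*} [Fintype V] [DecidableEq V]
    (β : ℝ) (hβ0 : 0 < β) (hβ1 : β < 1)
    (η : V → ℝ) (hη : ∀ i, 0 < η i) (hηsum : ∑ i, η i = 1)
    (x : V → Finset V) (hx : ∀ i, (x i).card = 2 ∧ i ∉ x i)
    (s : V) (τ : V → ℝ)
    (hτs : τ s = 0)
    (hτ : ∀ i, i ≠ s → τ i = 1 + ∑ j, P2 β η x i j * τ j)
    (hne : ∃ k, s ∈ x k)
    (v₁ : V) (hv₁ : v₁ ≠ s) (hmin : ∀ i, i ≠ s → τ v₁ ≤ τ i) :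
    s ∈ x v₁ := by
  by_contra hs
  obtain ⟨k, hk⟩ := hne
  have hks : k ≠ s := by rintro rfl; exact (hx k).2 hk
  have hle := le_of_minimizes_hittingTime (P2_nonneg hβ0.le hβ1.le fun j => (hη j).le)
    (sum_P2_eq_one hηsum fun i => (hx i).1) hτs hτ hv₁ hmin
    (fun _ _ => P2_le_of_notMem hβ0.le hs) hks
  exact (P2_lt_of_notMem_of_mem hβ0 hs hk).not_ge hle
end
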